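/- arXiv:2406.15739 — 3 statements merged into one kernel-verified Lean document; each statement's English description precedes it below -/
import Mathlib

section
/- Let G = (V,E) be a finite connected k-regular graph whose adjacency matrix has at least two distinct eigenvalues; let τ be its smallest eigenvalue and μ its second smallest eigenvalue. Let V_k and V_τ be the eigenspaces of k and τ respectively, and let U = V_k ⊕ V_τ. Then for every subset S ⊆ V, 2·ed(S)/|V| ≥ (k−τ)·|S|²/|V|² + τ·|S|/|V| − (τ−μ)·‖1_S − Proj_U(1_S)‖². -/
/-!
Work with the unnormalised dot product and write `1_S = p + q + h` with `p ∈ V_k`, `q ∈ V_τ` and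
`h ⊥ U`. The three pieces are pairwise orthogonal and `h` is also orthogonal to `A p` and `A q`, so
`2 ed(S) = ⟨1_S, A 1_S⟩ = k‖p‖² + τ‖q‖² + ⟨h, A h⟩` and `‖q‖² = |S| - ‖p‖² - ‖h‖²`.
Since `h` has no component along `V_τ`, expanding it in an orthonormal eigenbasis gives
`⟨h, A h⟩ ≥ μ‖h‖²`. Since the all-ones vector lies in `V_k`, `⟨p, 1⟩ = |S|`, and Cauchy–Schwarz gives
`‖p‖² ≥ |S|²/|V|`; this is multiplied by `k - τ ≥ 0`, as `k` is itself an eigenvalue.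
-/

set_option linter.unusedVariables false

open scoped Classical

noncomputable section

/-- The derangement graph on `Sym(n)`: permutations adjacent iff they disagree everywhere
(equivalently, `σ τ⁻¹` is a derangement). -/
def derangementGraph (n : ℕ) : SimpleGraph (Equiv.Perm (Fin n)) where
  Adj σ τ := σ ≠ τ ∧ ∀ i, σ i ≠ τ i
  symm := ⟨fun σ τ h => ⟨h.1.symm, fun i => (h.2 i).symm⟩⟩
  loopless := ⟨fun σ h => h.1 rfl⟩

/-- The star `A_{a→b}` in the derangement graph: permutations sending `a` to `b`. -/
def derStar (n : ℕ) (a b : Fin n) : Set (Equiv.Perm (Fin n)) := {σ | σ a = b}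

/-- Perfect matchings of `K_{2n}`, encoded as fixed-point-free involutions of `Fin (2n)`. -/
abbrev PMatching (n : ℕ) :=
  {f : Equiv.Perm (Fin (2 * n)) // (∀ x, f (f x) = x) ∧ ∀ x, f x ≠ x}

/-- The perfect matching graph `M_n`: matchings adjacent iff they share no edge. -/
def matchingGraph (n : ℕ) : SimpleGraph (PMatching n) where
  Adj m m' := m ≠ m' ∧ ∀ x, m.1 x ≠ m'.1 x
  symm := ⟨fun m m' h => ⟨h.1.symm, fun x => (h.2 x).symm⟩⟩
  loopless := ⟨fun m h => h.1 rfl⟩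

/-- The star `S_e` of a (non-diagonal) pair `e : Sym2 (Fin (2n))`:
all perfect matchings containing the edge `e`. -/
def pmStar (n : ℕ) (e : Sym2 (Fin (2 * n))) : Set (PMatching n) :=
  {m | ∃ x, e = s(x, m.1 x)}

/-- A set of vertices is independent if it spans no edges. -/
def IsIndepSet {V : Type*} (G : SimpleGraph V) (s : Set V) : Prop :=
  ∀ a ∈ s, ∀ b ∈ s, ¬ G.Adj a b

/-- The independence number of a finite graph. -/
noncomputable def indepNum {V : Type*} [Fintype V] (G : SimpleGraph V) : ℕ :=
  sSup {k | ∃ s : Set V, IsIndepSet G s ∧ s.ncard = k}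

/-- `edIn G s` is the number of edges of `G` with both endpoints in `s`. -/
noncomputable def edIn {V : Type*} (G : SimpleGraph V) (s : Set V) : ℕ :=
  Nat.card {e : Sym2 V // e ∈ G.edgeSet ∧ ∀ v ∈ e, v ∈ s}

/-- Probability that the random spanning subgraph `G_p` of `G` (each edge of `G` kept
independently with probability `p`) satisfies the predicate `P`. -/
noncomputable def prRandSub {V : Type*} [Fintype V] (G : SimpleGraph V) (p : ℝ)
    (P : SimpleGraph V → Prop) : ℝ :=
  ∑ S ∈ G.edgeFinset.powerset,
    if P (SimpleGraph.fromEdgeSet (S : Set (Sym2 V))) then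
      p ^ S.card * (1 - p) ^ (G.edgeFinset.card - S.card) else 0

/-- The normalized inner product `⟨f,g⟩ = (1/|V|) Σ_v f(v)g(v)`. -/
noncomputable def vInner {V : Type*} [Fintype V] (f g : V → ℝ) : ℝ :=
  (1 / (Fintype.card V : ℝ)) * ∑ v, f v * g v

section SymmetricMatrix

open Matrix Module.End

variable {V : Type*} [Fintype V] {A : Matrix V V ℝ}

theorem Matrix.IsSymm.dotProduct_mulVec_comm (hA : A.IsSymm) (u w : V → ℝ) :
    u ⬝ᵥ A *ᵥ w = A *ᵥ u ⬝ᵥ w := by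
  rw [dotProduct_mulVec, ← mulVec_transpose, hA.eq]

theorem Matrix.IsSymm.dotProduct_eq_zero_of_mem_eigenspace (hA : A.IsSymm) {a b : ℝ}
    (hab : a ≠ b) {u w : V → ℝ} (hu : u ∈ eigenspace (mulVecLin A) a)
    (hw : w ∈ eigenspace (mulVecLin A) b) : u ⬝ᵥ w = 0 := by
  rw [mem_eigenspace_iff, mulVecLin_apply] at hu hw
  have : a * (u ⬝ᵥ w) = b * (u ⬝ᵥ w) := by
    rw [← smul_eq_mul, ← smul_dotProduct, ← hu, ← hA.dotProduct_mulVec_comm, hw,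
      dotProduct_smul, smul_eq_mul]
  have h : (a - b) * (u ⬝ᵥ w) = 0 := by rw [sub_mul, this, sub_self]
  exact (mul_eq_zero.mp h).resolve_left (sub_ne_zero.mpr hab)

theorem Matrix.IsSymm.exists_add_of_mem_eigenspace_sup (hA : A.IsSymm) {a b : ℝ} {g : V → ℝ}
    (hg : g ∈ eigenspace (mulVecLin A) a ⊔ eigenspace (mulVecLin A) b) :
    ∃ p ∈ eigenspace (mulVecLin A) a, ∃ q ∈ eigenspace (mulVecLin A) b,
      p + q = g ∧ ∀ u ∈ eigenspace (mulVecLin A) a, q ⬝ᵥ u = 0 := by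
  obtain rfl | hab := eq_or_ne a b
  · exact ⟨g, by simpa using hg, 0, zero_mem _, add_zero g, fun u _ => zero_dotProduct u⟩
  obtain ⟨p, hp, q, hq, rfl⟩ := Submodule.mem_sup.mp hg
  exact ⟨p, hp, q, hq, rfl, fun u hu => hA.dotProduct_eq_zero_of_mem_eigenspace hab.symm hq hu⟩

theorem OrthonormalBasis.dotProduct_eq_sum (b : OrthonormalBasis V ℝ (EuclideanSpace ℝ V))
    (x y : V → ℝ) : x ⬝ᵥ y = ∑ i, (x ⬝ᵥ b i) * (y ⬝ᵥ b i) := by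
  have := b.sum_inner_mul_inner (WithLp.toLp 2 x) (WithLp.toLp 2 y)
  simp only [EuclideanSpace.inner_eq_star_dotProduct, star_trivial] at this
  simpa only [dotProduct_comm x] using this.symm

theorem Matrix.IsSymm.mul_dotProduct_self_le (hA : A.IsSymm) {τ μ : ℝ}
    (hμ : ∀ x, HasEigenvalue (mulVecLin A) x → x ≠ τ → μ ≤ x) {h : V → ℝ}
    (hh : ∀ u ∈ eigenspace (mulVecLin A) τ, h ⬝ᵥ u = 0) :
    μ * (h ⬝ᵥ h) ≤ h ⬝ᵥ A *ᵥ h := by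
  have hA' : A.IsHermitian := isHermitian_iff_isSymm.mpr hA
  set b := hA'.eigenvectorBasis
  have hb (i : V) : (b i : V → ℝ) ∈ eigenspace (mulVecLin A) (hA'.eigenvalues i) := by
    rw [mem_eigenspace_iff, mulVecLin_apply, hA'.mulVec_eigenvectorBasis]
  have hb0 (i : V) : (b i : V → ℝ) ≠ 0 :=
    fun h0 => b.orthonormal.ne_zero i (by simpa using congrArg (WithLp.toLp 2) h0)
  rw [b.dotProduct_eq_sum h h, b.dotProduct_eq_sum h (A *ᵥ h), Finset.mul_sum]
  refine Finset.sum_le_sum fun i _ => ?_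
  rw [← hA.dotProduct_mulVec_comm, hA'.mulVec_eigenvectorBasis, dotProduct_smul, smul_eq_mul]
  by_cases hi : hA'.eigenvalues i = τ
  · rw [hh _ (hi ▸ hb i)]; simp
  · have := hμ _ (hasEigenvalue_of_hasEigenvector ⟨hb i, hb0 i⟩) hi
    nlinarith [mul_self_nonneg (h ⬝ᵥ b i)]

theorem sq_dotProduct_one_div_card_le (p : V → ℝ) : (p ⬝ᵥ 1) ^ 2 / Fintype.card V ≤ p ⬝ᵥ p := by
  refine div_le_of_le_mul₀ (Nat.cast_nonneg _) (dotProduct_self_star_nonneg p) ?_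
  simpa [dotProduct_one, dotProduct, sq, mul_comm] using
    sq_sum_le_card_mul_sum_sq (s := Finset.univ) (f := p)

theorem Matrix.IsSymm.le_dotProduct_mulVec_self (hA : A.IsSymm) {k τ μ : ℝ}
    (hk : A *ᵥ 1 = k • 1) (hτk : τ ≤ k)
    (hμ : ∀ x, HasEigenvalue (mulVecLin A) x → x ≠ τ → μ ≤ x) {f g : V → ℝ}
    (hg : g ∈ eigenspace (mulVecLin A) k ⊔ eigenspace (mulVecLin A) τ)
    (hfg : ∀ u ∈ eigenspace (mulVecLin A) k ⊔ eigenspace (mulVecLin A) τ, (f - g) ⬝ᵥ u = 0) :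
    (k - τ) * (f ⬝ᵥ 1) ^ 2 / Fintype.card V + τ * (f ⬝ᵥ f) + (μ - τ) * ((f - g) ⬝ᵥ (f - g)) ≤
      f ⬝ᵥ A *ᵥ f := by
  obtain ⟨p, hp, q, hq, rfl, hqp⟩ := hA.exists_add_of_mem_eigenspace_sup hg
  set h := f - (p + q)
  have hf : f = p + q + h := by simp [h]
  have h1 : (1 : V → ℝ) ∈ eigenspace (mulVecLin A) k := by
    rw [mem_eigenspace_iff, mulVecLin_apply, hk]
  have hq1 : q ⬝ᵥ 1 = 0 := hqp 1 h1
  have hqp' : q ⬝ᵥ p = 0 := hqp p hp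
  have hh1 : h ⬝ᵥ 1 = 0 := hfg 1 (Submodule.mem_sup_left h1)
  have hhp : h ⬝ᵥ p = 0 := hfg p (Submodule.mem_sup_left hp)
  have hhq : h ⬝ᵥ q = 0 := hfg q (Submodule.mem_sup_right hq)
  have hpq : p ⬝ᵥ q = 0 := by rwa [dotProduct_comm]
  have hph : p ⬝ᵥ h = 0 := by rwa [dotProduct_comm]
  have hqh : q ⬝ᵥ h = 0 := by rwa [dotProduct_comm]
  have hhAh : μ * (h ⬝ᵥ h) ≤ h ⬝ᵥ A *ᵥ h :=
    hA.mul_dotProduct_self_le hμ fun u hu => hfg u (Submodule.mem_sup_right hu)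
  rw [mem_eigenspace_iff, mulVecLin_apply] at hp hq
  have hf1 : f ⬝ᵥ 1 = p ⬝ᵥ 1 := by
    rw [hf, add_dotProduct, add_dotProduct, hq1, hh1, add_zero, add_zero]
  have hff : f ⬝ᵥ f = p ⬝ᵥ p + q ⬝ᵥ q + h ⬝ᵥ h := by
    rw [hf]
    simp only [add_dotProduct, dotProduct_add, hpq, hqp', hph, hhp, hqh, hhq]
    ring
  have hfAf : f ⬝ᵥ A *ᵥ f = k * (p ⬝ᵥ p) + τ * (q ⬝ᵥ q) + h ⬝ᵥ A *ᵥ h := by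
    have hpAh : p ⬝ᵥ A *ᵥ h = 0 := by
      rw [hA.dotProduct_mulVec_comm, hp, smul_dotProduct, dotProduct_comm, hhp, smul_zero]
    have hqAh : q ⬝ᵥ A *ᵥ h = 0 := by
      rw [hA.dotProduct_mulVec_comm, hq, smul_dotProduct, dotProduct_comm, hhq, smul_zero]
    rw [hf, mulVec_add, mulVec_add, hp, hq]
    simp only [add_dotProduct, dotProduct_add, dotProduct_smul, smul_eq_mul,
      hpq, hqp', hhp, hhq, hpAh, hqAh]
    ring
  have hCS := mul_le_mul_of_nonneg_left (sq_dotProduct_one_div_card_le p) (sub_nonneg.mpr hτk)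
  rw [hf1, hff, hfAf, mul_div_assoc]
  linarith

end SymmetricMatrix

theorem vInner_eq_dotProduct_div {V : Type*} [Fintype V] (f g : V → ℝ) :
    vInner f g = f ⬝ᵥ g / Fintype.card V := by
  rw [vInner, dotProduct, one_div_mul_eq_div]

theorem Set.indicator_one_dotProduct_one {V : Type*} [Fintype V] (S : Set V) :
    S.indicator 1 ⬝ᵥ (1 : V → ℝ) = S.ncard := by
  simp [dotProduct_one, Set.indicator_apply, Set.ncard_eq_toFinset_card']

theorem Set.indicator_one_dotProduct_self {V : Type*} [Fintype V] (S : Set V) :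
    S.indicator 1 ⬝ᵥ S.indicator (1 : V → ℝ) = S.ncard := by
  simp +contextual [dotProduct, Set.indicator_apply, Set.ncard_eq_toFinset_card']

namespace SimpleGraph

open Matrix Finset

variable {V : Type*} [Fintype V] (G : SimpleGraph V) [DecidableRel G.Adj]

variable {G} in
theorem IsRegularOfDegree.adjMatrix_mulVec_one {k : ℕ} (hreg : G.IsRegularOfDegree k) :
    G.adjMatrix ℝ *ᵥ 1 = (k : ℝ) • 1 := by
  ext v
  simpa using adjMatrix_mulVec_const_apply_of_regular hreg (a := (1 : ℝ)) (v := v)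

theorem two_mul_edIn (S : Set V) :
    2 * edIn G S = #{x : V × V | G.Adj x.1 x.2 ∧ x.1 ∈ S ∧ x.2 ∈ S} := by
  let G' : SimpleGraph V :=
    { Adj x y := G.Adj x y ∧ x ∈ S ∧ y ∈ S
      symm := ⟨fun _ _ h => ⟨h.1.symm, h.2.2, h.2.1⟩⟩
      loopless := ⟨fun x h => G.loopless.irrefl x h.1⟩ }
  have hE : G'.edgeSet = {e | e ∈ G.edgeSet ∧ ∀ v ∈ e, v ∈ S} := by
    ext e
    induction e using Sym2.ind
    simp [G']
  convert G'.two_mul_card_edgeFinset using 2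
  rw [edgeFinset_card, ← Nat.card_eq_fintype_card, hE]
  rfl

theorem indicator_dotProduct_adjMatrix_mulVec_indicator (S : Set V) :
    S.indicator 1 ⬝ᵥ G.adjMatrix ℝ *ᵥ S.indicator 1 = 2 * edIn G S := by
  have hterm (x y : V) : S.indicator 1 x * (G.adjMatrix ℝ x y * S.indicator 1 y) =
      if G.Adj x y ∧ x ∈ S ∧ y ∈ S then (1 : ℝ) else 0 := by
    by_cases hx : x ∈ S <;> by_cases hy : y ∈ S <;> simp [hx, hy, adjMatrix_apply]
  simp only [dotProduct, mulVec, mul_sum, hterm]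
  rw [← sum_product', sum_boole]
  exact_mod_cast (G.two_mul_edIn S).symm

end SimpleGraph

theorem stmt4_general {V : Type*} [Fintype V] (G : SimpleGraph V)
    [DecidableRel G.Adj] (hconn : G.Connected)
    (k : ℕ) (hreg : ∀ v, G.degree v = k) (τ μ : ℝ)
    (hτmin : ∀ x : ℝ, Module.End.HasEigenvalue (Matrix.mulVecLin (G.adjMatrix ℝ)) x → τ ≤ x)
    (hμ2 : ∀ x : ℝ,
      Module.End.HasEigenvalue (Matrix.mulVecLin (G.adjMatrix ℝ)) x → x ≠ τ → μ ≤ x)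
    (S : Set V) (g : V → ℝ)
    (hgU : g ∈ Module.End.eigenspace (Matrix.mulVecLin (G.adjMatrix ℝ)) (k : ℝ) ⊔
        Module.End.eigenspace (Matrix.mulVecLin (G.adjMatrix ℝ)) τ)
    (hproj : ∀ u ∈ Module.End.eigenspace (Matrix.mulVecLin (G.adjMatrix ℝ)) (k : ℝ) ⊔
        Module.End.eigenspace (Matrix.mulVecLin (G.adjMatrix ℝ)) τ,
      vInner (Set.indicator S 1 - g) u = 0) :
    ((k : ℝ) - τ) * (S.ncard : ℝ) ^ 2 / (Fintype.card V : ℝ) ^ 2 +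
        τ * (S.ncard : ℝ) / (Fintype.card V : ℝ) -
        (τ - μ) * vInner (Set.indicator S 1 - g) (Set.indicator S 1 - g) ≤
      2 * (edIn G S : ℝ) / (Fintype.card V : ℝ) := by
  have : Nonempty V := hconn.nonempty
  have hn : (0 : ℝ) < Fintype.card V := by exact_mod_cast Fintype.card_pos
  have hA : (G.adjMatrix ℝ).IsSymm := G.isSymm_adjMatrix
  have hk := SimpleGraph.IsRegularOfDegree.adjMatrix_mulVec_one hreg
  have hτk : τ ≤ k := hτmin k <| Module.End.hasEigenvalue_of_hasEigenvector
    ⟨by rw [Module.End.mem_eigenspace_iff, Matrix.mulVecLin_apply, hk], one_ne_zero⟩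
  have hperp : ∀ u ∈ Module.End.eigenspace (Matrix.mulVecLin (G.adjMatrix ℝ)) (k : ℝ) ⊔
      Module.End.eigenspace (Matrix.mulVecLin (G.adjMatrix ℝ)) τ,
      (Set.indicator S 1 - g) ⬝ᵥ u = 0 := fun u hu => by
    simpa [vInner_eq_dotProduct_div, hn.ne'] using hproj u hu
  have key := hA.le_dotProduct_mulVec_self hk hτk hμ2 hgU hperp
  rw [Set.indicator_one_dotProduct_one, Set.indicator_one_dotProduct_self,
    G.indicator_dotProduct_adjMatrix_mulVec_indicator] at key
  rw [vInner_eq_dotProduct_div]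
  calc _ = (((k : ℝ) - τ) * (S.ncard : ℝ) ^ 2 / Fintype.card V + τ * S.ncard +
        (μ - τ) * ((Set.indicator S 1 - g) ⬝ᵥ (Set.indicator S 1 - g))) / Fintype.card V := by
        field_simp; ring
    _ ≤ _ := div_le_div_of_nonneg_right key hn.le

/-- Spectral lower bound on the edge density of an induced subgraph: for a connected
`k`-regular graph with least eigenvalue `τ` and second smallest eigenvalue `μ`, with
`U = V_k ⊕ V_τ` and `g = Proj_U(1_S)`,
`2 ed(S)/|V| ≥ (k-τ)|S|²/|V|² + τ|S|/|V| - (τ-μ)‖1_S - Proj_U 1_S‖²`. -/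
theorem stmt4 {V : Type*} [Fintype V] [DecidableEq V] (G : SimpleGraph V)
    [DecidableRel G.Adj] (hconn : G.Connected)
    (k : ℕ) (hreg : ∀ v, G.degree v = k) (τ μ : ℝ)
    (hτev : Module.End.HasEigenvalue (Matrix.mulVecLin (G.adjMatrix ℝ)) τ)
    (hμev : Module.End.HasEigenvalue (Matrix.mulVecLin (G.adjMatrix ℝ)) μ)
    (hτmin : ∀ x : ℝ, Module.End.HasEigenvalue (Matrix.mulVecLin (G.adjMatrix ℝ)) x → τ ≤ x)
    (hτμ : τ < μ)
    (hμ2 : ∀ x : ℝ,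
      Module.End.HasEigenvalue (Matrix.mulVecLin (G.adjMatrix ℝ)) x → x ≠ τ → μ ≤ x)
    (S : Set V) (g : V → ℝ)
    (hgU : g ∈ Module.End.eigenspace (Matrix.mulVecLin (G.adjMatrix ℝ)) (k : ℝ) ⊔
        Module.End.eigenspace (Matrix.mulVecLin (G.adjMatrix ℝ)) τ)
    (hproj : ∀ u ∈ Module.End.eigenspace (Matrix.mulVecLin (G.adjMatrix ℝ)) (k : ℝ) ⊔
        Module.End.eigenspace (Matrix.mulVecLin (G.adjMatrix ℝ)) τ,
      vInner (Set.indicator S 1 - g) u = 0) :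
    ((k : ℝ) - τ) * (S.ncard : ℝ) ^ 2 / (Fintype.card V : ℝ) ^ 2 +
        τ * (S.ncard : ℝ) / (Fintype.card V : ℝ) -
        (τ - μ) * vInner (Set.indicator S 1 - g) (Set.indicator S 1 - g) ≤
      2 * (edIn G S : ℝ) / (Fintype.card V : ℝ) :=
  stmt4_general G hconn k hreg τ μ hτmin hμ2 S g hgU hproj

end
end

section
/- Let G = (V,E) be a finite k-regular graph on v vertices with smallest adjacency eigenvalue τ, and assume the Delsarte–Hoffman ratio bound is tight, i.e. α(G) = v/(1 − k/τ). Let S be an independent set of size α(G), let A ⊆ S and B ⊆ V∖S, and set T = (S∖A) ∪ B. Then ed(T) ≥ |B|·(−τ − |A|). -/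
set_option linter.unusedVariables false

open scoped Classical

noncomputable section

/-! If `τ` is the least adjacency eigenvalue, `A - τ I` is positive semidefinite, so a vector `x`
with `xᵀ (A - τ I) x = 0` is a `τ`-eigenvector. For `x = |V| 1_S - |S| 𝟙` the quadratic form
vanishes when the ratio bound is tight: `(A - τ I) x` sums to zero because `𝟙` is an
eigenvector and `x ⟂ 𝟙`, and it vanishes on `S` by regularity and independence, while `x` is
constant off `S`. Evaluating `A x = τ x` at a vertex outside `S` shows that it has exactly `-τ`
neighbours in `S`, hence at least `-τ - |A|` in `S ∖ A`. The edges joining `B` to `S ∖ A` are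
distinct edges of `T`. -/

open Matrix Module.End

theorem Matrix.IsHermitian.posSemidef_sub_smul_one {n : Type*} [Fintype n] [DecidableEq n]
    {M : Matrix n n ℝ} (hM : M.IsHermitian) {τ : ℝ}
    (hτ : ∀ x, HasEigenvalue M.mulVecLin x → τ ≤ x) : (M - τ • 1).PosSemidef := by
  rw [posSemidef_iff_isHermitian_and_spectrum_nonneg, ← Algebra.algebraMap_eq_smul_one,
    ← spectrum.sub_singleton_eq]
  refine ⟨hM.sub (isHermitian_diagonal _), ?_⟩
  rintro _ ⟨μ, hμ, _, rfl, rfl⟩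
  rw [← spectrum_toLin', ← hasEigenvalue_iff_mem_spectrum, toLin'_apply'] at hμ
  simpa using hτ μ hμ

-- The indicator of `S` projected orthogonally to `𝟙`, scaled by `|V|` to avoid division.
def centredIndicator {V : Type*} [Fintype V] (S : Set V) : V → ℝ :=
  (Fintype.card V : ℝ) • S.indicator 1 - Function.const V (S.ncard : ℝ)

theorem sum_centredIndicator {V : Type*} [Fintype V] (S : Set V) :
    ∑ v, centredIndicator S v = 0 := by
  have hsum_indicator : ∑ v, S.indicator (1 : V → ℝ) v = S.ncard := by
    rw [Finset.sum_indicator_eq_sum_filter]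
    simp only [Pi.one_apply, Finset.sum_const, nsmul_one, Set.filter_mem_univ_eq_toFinset,
      Set.ncard_eq_toFinset_card']
  simp [centredIndicator, Finset.sum_sub_distrib, ← Finset.mul_sum, hsum_indicator]

namespace SimpleGraph

variable {V : Type*} [Fintype V] (G : SimpleGraph V)

theorem sum_neighborSet_inter_ncard_le_edIn {X Y : Set V} (hXY : Disjoint X Y) :
    ∑ y ∈ Y.toFinset, (G.neighborSet y ∩ X).ncard ≤ edIn G (X ∪ Y) := by
  have hcard : ∑ y ∈ Y.toFinset, (G.neighborSet y ∩ X).ncard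
      = (Y.toFinset.sigma fun y => (G.neighborSet y ∩ X).toFinset).card := by
    simp [Finset.card_sigma, Set.ncard_eq_toFinset_card']
  rw [hcard, ← Set.ncard_coe_finset]
  refine Set.ncard_le_ncard_of_injOn (t := {e | e ∈ G.edgeSet ∧ ∀ v ∈ e, v ∈ X ∪ Y})
    (fun p => s(p.1, p.2)) ?_ ?_ (Set.toFinite _)
  · rintro ⟨y, x⟩ h
    simp only [Finset.coe_sigma, Set.mem_sigma_iff, Finset.mem_coe, Set.mem_toFinset,
      Set.mem_inter_iff, mem_neighborSet] at h
    refine ⟨h.2.1, ?_⟩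
    simp only [Sym2.mem_iff]
    rintro v (rfl | rfl)
    exacts [Or.inr h.1, Or.inl h.2.2]
  · rintro ⟨y, x⟩ h ⟨y', x'⟩ h' heq
    simp only [Finset.coe_sigma, Set.mem_sigma_iff, Finset.mem_coe, Set.mem_toFinset,
      Set.mem_inter_iff, mem_neighborSet] at h h'
    rcases Sym2.eq_iff.1 heq with ⟨rfl, rfl⟩ | ⟨rfl, rfl⟩
    · rfl
    · exact (hXY.ne_of_mem h'.2.2 h.1 rfl).elim

variable [DecidableRel G.Adj]

theorem adjMatrix_mulVec_indicator_one_apply {α : Type*} [NonAssocSemiring α] (S : Set V)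
    (v : V) : (G.adjMatrix α *ᵥ S.indicator 1) v = (G.neighborSet v ∩ S).ncard := by
  rw [adjMatrix_mulVec_apply, Finset.sum_indicator_eq_sum_filter]
  simp only [Pi.one_apply, Finset.sum_const, nsmul_one, Set.ncard_eq_toFinset_card']
  congr 2
  ext u
  simp

theorem sum_adjMatrix_mulVec_of_regular {α : Type*} [Semiring α] {k : ℕ}
    (hreg : G.IsRegularOfDegree k) (x : V → α) :
    ∑ v, (G.adjMatrix α *ᵥ x) v = k * ∑ v, x v := by
  have hdeg : 1 ᵥ* G.adjMatrix α = Function.const V (k : α) := by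
    ext u
    simp [hreg u]
  rw [← one_dotProduct, dotProduct_mulVec, hdeg, dotProduct, Finset.mul_sum]
  rfl

theorem adjMatrix_mulVec_centredIndicator_apply {k : ℕ} (hreg : G.IsRegularOfDegree k)
    (S : Set V) (v : V) :
    (G.adjMatrix ℝ *ᵥ centredIndicator S) v =
      Fintype.card V * (G.neighborSet v ∩ S).ncard - S.ncard * k := by
  simp only [centredIndicator, mulVec_sub, mulVec_smul, Pi.sub_apply, Pi.smul_apply, smul_eq_mul,
    adjMatrix_mulVec_indicator_one_apply, adjMatrix_mulVec_const_apply_of_regular hreg]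
  ring

theorem adjMatrix_mulVec_centredIndicator_of_hoffman_tight {k : ℕ}
    (hreg : G.IsRegularOfDegree k) {τ : ℝ}
    (hτ : ∀ x, HasEigenvalue (G.adjMatrix ℝ).mulVecLin x → τ ≤ x) {S : Set V}
    (hS : G.IsIndepSet S) (htight : (S.ncard : ℝ) * (τ - k) = Fintype.card V * τ) :
    G.adjMatrix ℝ *ᵥ centredIndicator S = τ • centredIndicator S := by
  set x := centredIndicator S
  set M := G.adjMatrix ℝ - τ • 1
  have hMx : ∀ v, (M *ᵥ x) v = (G.adjMatrix ℝ *ᵥ x) v - τ * x v := by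
    simp [M, sub_mulVec, smul_mulVec]
  have hMx_on_S : ∀ v ∈ S, (M *ᵥ x) v = 0 := by
    intro v hv
    have hD : G.neighborSet v ∩ S = ∅ :=
      Set.eq_empty_of_forall_notMem fun u hu => hS hv hu.2 (G.ne_of_adj hu.1) hu.1
    rw [hMx, adjMatrix_mulVec_centredIndicator_apply G hreg, hD, Set.ncard_empty]
    simp only [x, centredIndicator, Pi.sub_apply, Pi.smul_apply, Set.indicator_of_mem hv,
      Pi.one_apply, Function.const_apply, smul_eq_mul]
    linear_combination htight
  have hsum_Mx : ∑ v, (M *ᵥ x) v = 0 := by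
    simp only [hMx, Finset.sum_sub_distrib, sum_adjMatrix_mulVec_of_regular G hreg,
      ← Finset.mul_sum, x, sum_centredIndicator, mul_zero, sub_zero]
  -- `x` is constant, equal to `-|S|`, off `S`, and `M *ᵥ x` vanishes on `S`.
  have hquad : x ⬝ᵥ M *ᵥ x = 0 := by
    have hterm : ∀ v, x v * (M *ᵥ x) v = -S.ncard * (M *ᵥ x) v := by
      intro v
      by_cases hv : v ∈ S
      · simp [hMx_on_S v hv]
      · simp [x, centredIndicator, hv]
    simp [dotProduct, hterm, ← Finset.mul_sum, hsum_Mx]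
  have hM : M.PosSemidef := (G.isHermitian_adjMatrix ℝ).posSemidef_sub_smul_one hτ
  have hMx_zero : M *ᵥ x = 0 := (hM.dotProduct_mulVec_zero_iff x).1 (by simpa using hquad)
  rwa [sub_mulVec, smul_mulVec, one_mulVec, sub_eq_zero] at hMx_zero

theorem ncard_neighborSet_inter_eq_of_hoffman_tight {k : ℕ} (hreg : G.IsRegularOfDegree k)
    {τ : ℝ} (hτ : ∀ x, HasEigenvalue (G.adjMatrix ℝ).mulVecLin x → τ ≤ x) {S : Set V}
    (hS : G.IsIndepSet S) (htight : (S.ncard : ℝ) * (τ - k) = Fintype.card V * τ)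
    {b : V} (hb : b ∉ S) : ((G.neighborSet b ∩ S).ncard : ℝ) = -τ := by
  have hb_eq :=
    congrFun (adjMatrix_mulVec_centredIndicator_of_hoffman_tight G hreg hτ hS htight) b
  rw [adjMatrix_mulVec_centredIndicator_apply G hreg] at hb_eq
  simp only [centredIndicator, Pi.sub_apply, Pi.smul_apply, Set.indicator_of_notMem hb,
    smul_eq_mul, mul_zero, Function.const_apply, zero_sub, mul_neg] at hb_eq
  have hn : (0 : ℝ) < Fintype.card V := Nat.cast_pos.2 (Fintype.card_pos_iff.2 ⟨b⟩)
  apply mul_left_cancel₀ hn.ne'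
  linear_combination hb_eq - htight

theorem neg_sub_ncard_le_ncard_neighborSet_inter_sdiff_of_hoffman_tight {k : ℕ}
    (hreg : G.IsRegularOfDegree k) {τ : ℝ}
    (hτ : ∀ x, HasEigenvalue (G.adjMatrix ℝ).mulVecLin x → τ ≤ x) {S : Set V}
    (hS : G.IsIndepSet S) (htight : (S.ncard : ℝ) * (τ - k) = Fintype.card V * τ)
    (A : Set V) {b : V} (hb : b ∉ S) :
    -τ - A.ncard ≤ ((G.neighborSet b ∩ (S \ A)).ncard : ℝ) := by
  have hA : (G.neighborSet b ∩ S).ncard ≤ (G.neighborSet b ∩ (S \ A)).ncard + A.ncard := by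
    rw [← Set.inter_sdiff_assoc]
    exact Set.ncard_le_ncard_sdiff_add_ncard _ _
  rw [← G.ncard_neighborSet_inter_eq_of_hoffman_tight hreg hτ hS htight hb, sub_le_iff_le_add]
  exact_mod_cast hA

end SimpleGraph

theorem stmt5_general {V : Type*} [Fintype V] (G : SimpleGraph V)
    [DecidableRel G.Adj] (k : ℕ) (hreg : ∀ w, G.degree w = k) (τ : ℝ)
    (hτmin : ∀ x : ℝ, Module.End.HasEigenvalue (Matrix.mulVecLin (G.adjMatrix ℝ)) x → τ ≤ x)
    (htight : (indepNum G : ℝ) = (Fintype.card V : ℝ) / (1 - (k : ℝ) / τ))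
    (S : Set V) (hSind : IsIndepSet G S) (hScard : S.ncard = indepNum G)
    (A B : Set V) (hB : B ⊆ Sᶜ) :
    (B.ncard : ℝ) * (-τ - (A.ncard : ℝ)) ≤ (edIn G ((S \ A) ∪ B) : ℝ) := by
  rcases le_or_gt (-τ - (A.ncard : ℝ)) 0 with hle | hpos
  · exact (mul_nonpos_of_nonneg_of_nonpos (Nat.cast_nonneg _) hle).trans (Nat.cast_nonneg _)
  have hτ : τ < 0 := by linarith [(Nat.cast_nonneg A.ncard : (0 : ℝ) ≤ A.ncard)]
  have hτk : τ - k < 0 := by linarith [(Nat.cast_nonneg k : (0 : ℝ) ≤ k)]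
  have htight' : (S.ncard : ℝ) * (τ - k) = Fintype.card V * τ := by
    rwa [← hScard, one_sub_div hτ.ne, div_div_eq_mul_div, eq_div_iff hτk.ne] at htight
  have hSind' : G.IsIndepSet S := fun u hu v hv _ => hSind u hu v hv
  have hdisj : Disjoint (S \ A) B :=
    (Set.subset_compl_iff_disjoint_right.1 hB).symm.mono_left Set.sdiff_subset
  calc (B.ncard : ℝ) * (-τ - A.ncard) = ∑ b ∈ B.toFinset, (-τ - (A.ncard : ℝ)) := by
        rw [Finset.sum_const, nsmul_eq_mul, Set.ncard_eq_toFinset_card']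
    _ ≤ ∑ b ∈ B.toFinset, ((G.neighborSet b ∩ (S \ A)).ncard : ℝ) :=
        Finset.sum_le_sum fun b hb =>
          G.neg_sub_ncard_le_ncard_neighborSet_inter_sdiff_of_hoffman_tight hreg hτmin hSind'
            htight' A (hB (Set.mem_toFinset.1 hb))
    _ ≤ edIn G ((S \ A) ∪ B) := by
        exact_mod_cast G.sum_neighborSet_inter_ncard_le_edIn hdisj

/-- Consequence of tightness in the Delsarte–Hoffman ratio bound: if `α(G) = v/(1-k/τ)`,
`S` is a maximum independent set, `A ⊆ S`, `B ⊆ V∖S` and `T = (S∖A) ∪ B`, then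
`ed(T) ≥ |B|(-τ-|A|)`. -/
theorem stmt5 {V : Type*} [Fintype V] [DecidableEq V] (G : SimpleGraph V)
    [DecidableRel G.Adj] (k : ℕ) (hreg : ∀ w, G.degree w = k) (τ : ℝ)
    (hτev : Module.End.HasEigenvalue (Matrix.mulVecLin (G.adjMatrix ℝ)) τ)
    (hτmin : ∀ x : ℝ, Module.End.HasEigenvalue (Matrix.mulVecLin (G.adjMatrix ℝ)) x → τ ≤ x)
    (htight : (indepNum G : ℝ) = (Fintype.card V : ℝ) / (1 - (k : ℝ) / τ))
    (S : Set V) (hSind : IsIndepSet G S) (hScard : S.ncard = indepNum G)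
    (A B : Set V) (hA : A ⊆ S) (hB : B ⊆ Sᶜ) :
    (B.ncard : ℝ) * (-τ - (A.ncard : ℝ)) ≤ (edIn G ((S \ A) ∪ B) : ℝ) :=
  stmt5_general G k hreg τ hτmin htight S hSind hScard A B hB

end
end

section
/- E[h²] = ((2n−2)/((2n−1)(2n−3))) · Σ_{e ∈ E(K_{2n})} b_e². -/
set_option linter.unusedVariables false

open scoped Classical

noncomputable section

/-- The edges of `K_{2n}`: non-diagonal elements of `Sym2 (Fin (2n))`. -/
noncomputable def pmEdges (n : ℕ) : Finset (Sym2 (Fin (2 * n))) :=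
  Finset.univ.filter fun e => ¬e.IsDiag

/-- Expectation of a function on perfect matchings: `E[φ] = (1/(2n-1)!!) Σ_P φ(P)`. -/
noncomputable def pmExp (n : ℕ) (φ : PMatching n → ℝ) : ℝ :=
  (1 / (Nat.doubleFactorial (2 * n - 1) : ℝ)) * ∑ m, φ m

/-- The inner product `⟨f,g⟩ = (1/(2n-1)!!) Σ_P f(P)g(P)` on functions on matchings. -/
noncomputable def pmInner (n : ℕ) (f g : PMatching n → ℝ) : ℝ :=
  (1 / (Nat.doubleFactorial (2 * n - 1) : ℝ)) * ∑ m, f m * g m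

/-- `U`: the linear span of the indicator vectors of the stars of `M_n`. -/
noncomputable def starSpan (n : ℕ) : Submodule ℝ (PMatching n → ℝ) :=
  Submodule.span ℝ
    {f | ∃ e : Sym2 (Fin (2 * n)), ¬e.IsDiag ∧ f = Set.indicator (pmStar n e) 1}

/-- `a_e = |A ∩ S_e|/(2n-3)!!`. -/
noncomputable def aCoe (n : ℕ) (A : Set (PMatching n)) (e : Sym2 (Fin (2 * n))) : ℝ :=
  ((A ∩ pmStar n e).ncard : ℝ) / (Nat.doubleFactorial (2 * n - 3) : ℝ)

/-- `b_e = a_e - c/(2n-1)`. -/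
noncomputable def bCoe (n : ℕ) (A : Set (PMatching n)) (c : ℝ)
    (e : Sym2 (Fin (2 * n))) : ℝ :=
  aCoe n A e - c / (2 * (n : ℝ) - 1)

/-- `g = Σ_e a_e · 1_{S_e}`. -/
noncomputable def gFun (n : ℕ) (A : Set (PMatching n)) : PMatching n → ℝ :=
  fun m => ∑ e ∈ pmEdges n, aCoe n A e * Set.indicator (pmStar n e) 1 m

/-- `h = Σ_e b_e · 1_{S_e}`. -/
noncomputable def hFun (n : ℕ) (A : Set (PMatching n)) (c : ℝ) : PMatching n → ℝ :=
  fun m => ∑ e ∈ pmEdges n, bCoe n A c e * Set.indicator (pmStar n e) 1 m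


/-!
Expanding the square, `∑_P h(P)² = ∑_{e,f} b_e b_f |S_e ∩ S_f|`. Two stars meet in `(2n-3)!!`
matchings if `e = f`, in none if `e` and `f` share exactly one vertex, and in `(2n-5)!!` if they are
disjoint. Every matching uses exactly one edge at each vertex `w`, so `∑_{f ∋ w} a_f = c` and hence
`∑_{f ∋ w} b_f = 0`; by inclusion–exclusion over the two endpoints of `e`, the `b_f` with `f`
disjoint from `e` then sum to `b_e`. So `∑_f b_f |S_e ∩ S_f| = ((2n-3)!! + (2n-5)!!) b_e`, and
`((2n-3)!! + (2n-5)!!) / (2n-1)!! = (2n-2) / ((2n-1)(2n-3))`.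

Perfect matchings are counted as fixed-point-free involutions: those sending `x` to `y` correspond
to the fixed-point-free involutions of the complement of `{x, y}`.
-/

open scoped Nat Finset

theorem sum_sq_sum_mul_indicator {ι X : Type*} [Fintype X] (s : Finset ι) (w : ι → ℝ)
    (S : ι → Set X) :
    ∑ x, (∑ i ∈ s, w i * (S i).indicator 1 x) ^ 2 =
      ∑ i ∈ s, ∑ j ∈ s, w i * (w j * ((S i ∩ S j).ncard : ℝ)) := by
  have hcount (i j : ι) :
      ∑ x, (S i).indicator (1 : X → ℝ) x * (S j).indicator 1 x = ((S i ∩ S j).ncard : ℝ) := by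
    classical
    calc ∑ x, (S i).indicator (1 : X → ℝ) x * (S j).indicator 1 x
        = ∑ x, (S i ∩ S j).indicator (1 : X → ℝ) x := by simp [Set.inter_indicator_one]
      _ = _ := by
        generalize S i ∩ S j = T
        simp [Set.indicator_apply, Set.ncard_eq_toFinset_card']
  simp_rw [sq, Finset.sum_mul_sum, Finset.sum_comm (γ := X), ← hcount, Finset.mul_sum]
  refine Finset.sum_congr rfl fun i _ => Finset.sum_congr rfl fun j _ => ?_
  exact Finset.sum_congr rfl fun x _ => by ring

theorem doubleFactorial_add_div_doubleFactorial {n : ℕ} (hn : 2 ≤ n) :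
    (((2 * n - 3)‼ : ℝ) + (2 * n - 5)‼) / (2 * n - 1)‼ =
      (2 * (n : ℝ) - 2) / ((2 * (n : ℝ) - 1) * (2 * (n : ℝ) - 3)) := by
  obtain ⟨k, rfl⟩ : ∃ k, n = k + 2 := ⟨n - 2, by omega⟩
  rw [show 2 * (k + 2) - 1 = 2 * k + 1 + 2 by omega, show 2 * (k + 2) - 3 = 2 * k + 1 by omega,
    show 2 * (k + 2) - 5 = 2 * k - 1 by omega, Nat.doubleFactorial_add_two,
    Nat.doubleFactorial_add_one]
  have hpos : (0 : ℝ) < (2 * k - 1)‼ := by exact_mod_cast Nat.doubleFactorial_pos _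
  push_cast
  rw [show (2 * ((k : ℝ) + 2) - 1) * (2 * (k + 2) - 3) = (2 * k + 1 + 2) * (2 * k + 1) by ring,
    div_eq_div_iff (by positivity) (by positivity)]
  ring

abbrev FixedPointFreeInvolution (α : Type*) :=
  {f : Equiv.Perm α // (∀ x, f (f x) = x) ∧ ∀ x, f x ≠ x}

namespace FixedPointFreeInvolution

variable {α : Type*} {x y : α}

theorem apply_eq_of_apply_eq {f : FixedPointFreeInvolution α} (h : f.1 x = y) : f.1 y = x := by
  rw [← h, f.2.1]

def restrictCompl (f : {f : FixedPointFreeInvolution α // f.1 x = y})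
    (z : {z // z ≠ x ∧ z ≠ y}) : {z // z ≠ x ∧ z ≠ y} :=
  ⟨f.1.1 z, fun h => z.2.2 (by rw [← f.1.2.1 z, h, f.2]),
    fun h => z.2.1 (by rw [← f.1.2.1 z, h, apply_eq_of_apply_eq f.2])⟩

theorem restrictCompl_involutive (f : {f : FixedPointFreeInvolution α // f.1 x = y}) :
    Function.Involutive (restrictCompl f) :=
  fun z => Subtype.ext (f.1.2.1 z)

variable [DecidableEq α]

def extendCompl (x y : α) (g : {z // z ≠ x ∧ z ≠ y} → {z // z ≠ x ∧ z ≠ y}) (z : α) : α :=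
  if hx : z = x then y else if hy : z = y then x else g ⟨z, hx, hy⟩

theorem extendCompl_left (g : {z // z ≠ x ∧ z ≠ y} → {z // z ≠ x ∧ z ≠ y}) :
    extendCompl x y g x = y := by
  simp [extendCompl]

theorem extendCompl_right (hxy : x ≠ y) (g : {z // z ≠ x ∧ z ≠ y} → {z // z ≠ x ∧ z ≠ y}) :
    extendCompl x y g y = x := by
  simp [extendCompl, hxy.symm]

theorem extendCompl_of_ne (g : {z // z ≠ x ∧ z ≠ y} → {z // z ≠ x ∧ z ≠ y})
    (z : {z // z ≠ x ∧ z ≠ y}) : extendCompl x y g z = g z := by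
  simp [extendCompl, z.2.1, z.2.2]

theorem extendCompl_involutive (hxy : x ≠ y) {g : {z // z ≠ x ∧ z ≠ y} → {z // z ≠ x ∧ z ≠ y}}
    (hg : Function.Involutive g) : Function.Involutive (extendCompl x y g) := by
  intro z
  by_cases hzx : z = x
  · rw [hzx, extendCompl_left, extendCompl_right hxy]
  by_cases hzy : z = y
  · rw [hzy, extendCompl_right hxy, extendCompl_left]
  rw [extendCompl_of_ne g ⟨z, hzx, hzy⟩, extendCompl_of_ne, hg]

theorem extendCompl_ne (hxy : x ≠ y) {g : {z // z ≠ x ∧ z ≠ y} → {z // z ≠ x ∧ z ≠ y}}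
    (hg : ∀ z, g z ≠ z) (z : α) : extendCompl x y g z ≠ z := by
  by_cases hzx : z = x
  · rw [hzx, extendCompl_left]; exact hxy.symm
  by_cases hzy : z = y
  · rw [hzy, extendCompl_right hxy]; exact hxy
  rw [extendCompl_of_ne g ⟨z, hzx, hzy⟩]
  exact fun h => hg _ (Subtype.ext h)

def fiberEquiv (hxy : x ≠ y) :
    {f : FixedPointFreeInvolution α // f.1 x = y} ≃
      FixedPointFreeInvolution {z // z ≠ x ∧ z ≠ y} where
  toFun f := ⟨(restrictCompl_involutive f).toPerm, restrictCompl_involutive f,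
    fun z h => f.1.2.2 z (congrArg Subtype.val h)⟩
  invFun g := ⟨⟨(extendCompl_involutive hxy g.2.1).toPerm, extendCompl_involutive hxy g.2.1,
    extendCompl_ne hxy fun z h => g.2.2 z h⟩, extendCompl_left _⟩
  left_inv f := by
    refine Subtype.ext (Subtype.ext (Equiv.ext fun z => ?_))
    simp only [Function.Involutive.coe_toPerm]
    by_cases hzx : z = x
    · rw [hzx, extendCompl_left, f.2]
    by_cases hzy : z = y
    · rw [hzy, extendCompl_right hxy, apply_eq_of_apply_eq f.2]
    exact extendCompl_of_ne _ ⟨z, hzx, hzy⟩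
  right_inv g := Subtype.ext (Equiv.ext fun z => Subtype.ext (extendCompl_of_ne g.1 z))

variable [Fintype α]

theorem card_compl_pair (hxy : x ≠ y) :
    Fintype.card {z // z ≠ x ∧ z ≠ y} = Fintype.card α - 2 := by
  rw [Fintype.card_subtype, ← Finset.card_univ, ← Finset.card_pair hxy,
    ← Finset.card_sdiff_of_subset (Finset.subset_univ _)]
  congr 1
  ext z
  simp

theorem card_eq_doubleFactorial (m : ℕ) :
    ∀ {α : Type*} [Fintype α] [DecidableEq α], Fintype.card α = 2 * m →
      Nat.card (FixedPointFreeInvolution α) = (2 * m - 1)‼ := by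
  induction m with
  | zero =>
    intro α _ _ hcard
    have : IsEmpty α := Fintype.card_eq_zero_iff.mp hcard
    exact Nat.card_eq_one_iff_exists.mpr
      ⟨⟨1, isEmptyElim, isEmptyElim⟩, fun f => Subtype.ext (Equiv.ext isEmptyElim)⟩
  | succ m ih =>
    intro α _ _ hcard
    obtain ⟨x⟩ : Nonempty α := Fintype.card_pos_iff.mp (by omega)
    have hfiber (y : α) : Nat.card {f : FixedPointFreeInvolution α // f.1 x = y} =
        if y = x then 0 else (2 * m - 1)‼ := by
      split_ifs with hyx
      · have : IsEmpty {f : FixedPointFreeInvolution α // f.1 x = y} :=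
          ⟨fun f => f.1.2.2 x (hyx ▸ f.2)⟩
        exact Nat.card_of_isEmpty
      · rw [Nat.card_congr (fiberEquiv (Ne.symm hyx)),
          ih (by rw [card_compl_pair (Ne.symm hyx), hcard]; omega)]
    rw [← Nat.card_congr (Equiv.sigmaFiberEquiv fun f : FixedPointFreeInvolution α => f.1 x),
      Nat.card_sigma]
    simp only [hfiber, Finset.sum_ite, Finset.sum_const_zero, Finset.sum_const, zero_add,
      smul_eq_mul, Finset.filter_ne', Finset.card_erase_of_mem (Finset.mem_univ x), Finset.card_univ, hcard]
    rw [show 2 * (m + 1) - 1 = 2 * m + 1 by omega, Nat.doubleFactorial_add_one]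

theorem card_fiber (m : ℕ) (hcard : Fintype.card α = 2 * m) (hxy : x ≠ y) :
    Nat.card {f : FixedPointFreeInvolution α // f.1 x = y} = (2 * m - 3)‼ := by
  rw [Nat.card_congr (fiberEquiv hxy),
    card_eq_doubleFactorial (m - 1) (by rw [card_compl_pair hxy, hcard]; omega)]
  congr 1
  omega

theorem card_fiber_inter (m : ℕ) (hcard : Fintype.card α = 2 * m) {u v : α} (hxy : x ≠ y)
    (huv : u ≠ v) (hux : u ≠ x) (huy : u ≠ y) (hvx : v ≠ x) (hvy : v ≠ y) :
    Nat.card {f : FixedPointFreeInvolution α // f.1 x = y ∧ f.1 u = v} = (2 * m - 5)‼ := by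
  have e : {f : FixedPointFreeInvolution α // f.1 x = y ∧ f.1 u = v} ≃
      {g : FixedPointFreeInvolution {z // z ≠ x ∧ z ≠ y} // g.1 ⟨u, hux, huy⟩ = ⟨v, hvx, hvy⟩} :=
    (Equiv.subtypeSubtypeEquivSubtypeInter _ _).symm.trans
      ((fiberEquiv hxy).subtypeEquiv fun _ => ⟨fun h => Subtype.ext h, congrArg Subtype.val⟩)
  rw [Nat.card_congr e, card_fiber (m - 1) (by rw [card_compl_pair hxy, hcard]; omega)
    fun h => huv (congrArg Subtype.val h)]
  congr 1
  omega

end FixedPointFreeInvolution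

section Matchings

variable {n : ℕ}

theorem mem_pmEdges {e : Sym2 (Fin (2 * n))} : e ∈ pmEdges n ↔ ¬e.IsDiag := by
  simp [pmEdges]

theorem mem_pmStar_iff_of_mem {e : Sym2 (Fin (2 * n))} {m : PMatching n} {w : Fin (2 * n)}
    (hw : w ∈ e) : m ∈ pmStar n e ↔ e = s(w, m.1 w) := by
  refine ⟨fun ⟨z, hz⟩ => ?_, fun h => ⟨w, h⟩⟩
  subst hz
  rcases Sym2.mem_iff.mp hw with rfl | rfl
  · rfl
  · rw [m.2.1, Sym2.eq_swap]

theorem pmStar_mk {a b : Fin (2 * n)} (hab : a ≠ b) : pmStar n s(a, b) = {m | m.1 a = b} := by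
  ext m
  rw [mem_pmStar_iff_of_mem (Sym2.mem_mk_left a b), Sym2.congr_right, eq_comm]
  rfl

theorem pmStar_inter_pmStar_eq_empty {e f : Sym2 (Fin (2 * n))} (hef : e ≠ f) {w : Fin (2 * n)}
    (hwe : w ∈ e) (hwf : w ∈ f) : pmStar n e ∩ pmStar n f = ∅ :=
  Set.eq_empty_of_forall_notMem fun _ ⟨he, hf⟩ =>
    hef (((mem_pmStar_iff_of_mem hwe).mp he).trans ((mem_pmStar_iff_of_mem hwf).mp hf).symm)

theorem ncard_pmStar {e : Sym2 (Fin (2 * n))} (he : ¬e.IsDiag) :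
    (pmStar n e).ncard = (2 * n - 3)‼ := by
  induction e using Sym2.ind with
  | _ a b =>
    rw [pmStar_mk (fun h => he (Sym2.mk_isDiag_iff.mpr h)), ← Nat.card_coe_set_eq]
    exact FixedPointFreeInvolution.card_fiber n (Fintype.card_fin _)
      fun h => he (Sym2.mk_isDiag_iff.mpr h)

theorem ncard_pmStar_inter_pmStar {a b : Fin (2 * n)} (hab : a ≠ b) {f : Sym2 (Fin (2 * n))}
    (hf : ¬f.IsDiag) (haf : a ∉ f) (hbf : b ∉ f) :
    (pmStar n s(a, b) ∩ pmStar n f).ncard = (2 * n - 5)‼ := by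
  induction f using Sym2.ind with
  | _ u v =>
    simp only [Sym2.mem_iff, not_or] at haf hbf
    rw [pmStar_mk hab, pmStar_mk fun h => hf (Sym2.mk_isDiag_iff.mpr h), ← Nat.card_coe_set_eq]
    exact FixedPointFreeInvolution.card_fiber_inter n (Fintype.card_fin _) hab
      (fun h => hf (Sym2.mk_isDiag_iff.mpr h)) (Ne.symm haf.1) (Ne.symm hbf.1) (Ne.symm haf.2)
      (Ne.symm hbf.2)

end Matchings

section VertexSums

variable {n : ℕ}

theorem card_filter_mem_pmEdges (w : Fin (2 * n)) : #{f ∈ pmEdges n | w ∈ f} = 2 * n - 1 := by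
  have himage : (Finset.univ.erase w).image (fun y => s(w, y)) = {f ∈ pmEdges n | w ∈ f} := by
    ext f
    simp only [Finset.mem_image, Finset.mem_erase, Finset.mem_univ, and_true, Finset.mem_filter,
      mem_pmEdges]
    constructor
    · rintro ⟨y, hy, rfl⟩
      exact ⟨fun hd => hy (Sym2.mk_isDiag_iff.mp hd).symm, Sym2.mem_mk_left w y⟩
    · rintro ⟨hf, hwf⟩
      refine ⟨Sym2.Mem.other hwf, fun h => hf ?_, Sym2.other_spec hwf⟩
      rw [← Sym2.other_spec hwf, h]
      exact Sym2.mk_isDiag_iff.mpr rfl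
  rw [← himage, Finset.card_image_of_injective _ fun _ _ => Sym2.congr_right.mp,
    Finset.card_erase_of_mem (Finset.mem_univ w), Finset.card_univ, Fintype.card_fin]

theorem sum_ncard_inter_pmStar (w : Fin (2 * n)) (A : Set (PMatching n)) :
    ∑ f ∈ pmEdges n with w ∈ f, (A ∩ pmStar n f).ncard = A.ncard := by
  rw [Set.ncard_eq_toFinset_card' A, Finset.card_eq_sum_card_fiberwise
    (f := fun m : PMatching n => s(w, m.1 w)) (t := {f ∈ pmEdges n | w ∈ f}) fun m _ => ?_]
  · refine Finset.sum_congr rfl fun f hf => ?_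
    rw [← Set.ncard_coe_finset]
    congr 1
    ext m
    simp [mem_pmStar_iff_of_mem (Finset.mem_filter.mp hf).2, eq_comm]
  · exact Finset.mem_filter.mpr
      ⟨mem_pmEdges.mpr fun h => m.2.2 w (Sym2.mk_isDiag_iff.mp h).symm, Sym2.mem_mk_left _ _⟩

end VertexSums

section Coefficients

variable {n : ℕ} {A : Set (PMatching n)} {c : ℝ}

theorem sum_aCoe_of_mem (hA : (A.ncard : ℝ) = c * (2 * n - 3)‼) (w : Fin (2 * n)) :
    ∑ f ∈ pmEdges n with w ∈ f, aCoe n A f = c := by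
  unfold aCoe
  rw [← Finset.sum_div, ← Nat.cast_sum, sum_ncard_inter_pmStar, hA,
    mul_div_cancel_right₀ _ (Nat.cast_ne_zero.mpr (Nat.doubleFactorial_pos _).ne')]

theorem sum_bCoe_of_mem (hA : (A.ncard : ℝ) = c * (2 * n - 3)‼) (w : Fin (2 * n)) :
    ∑ f ∈ pmEdges n with w ∈ f, bCoe n A c f = 0 := by
  have hn : 1 ≤ 2 * n := Fin.pos w
  have hdeg : ((2 * n - 1 : ℕ) : ℝ) = 2 * n - 1 := by push_cast [Nat.cast_sub hn]; ring
  have hdeg_ne : (2 * n - 1 : ℝ) ≠ 0 := by rw [← hdeg]; exact_mod_cast (by omega : 2 * n - 1 ≠ 0)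
  unfold bCoe
  rw [Finset.sum_sub_distrib, sum_aCoe_of_mem hA, Finset.sum_const,
    card_filter_mem_pmEdges, nsmul_eq_mul, hdeg, mul_div_cancel₀ _ hdeg_ne, sub_self]

/-- Summing the vertex sums counts every edge twice, once at each endpoint. -/
theorem sum_bCoe (hA : (A.ncard : ℝ) = c * (2 * n - 3)‼) : ∑ f ∈ pmEdges n, bCoe n A c f = 0 := by
  have hdouble :
      ∑ w, ∑ f ∈ pmEdges n with w ∈ f, bCoe n A c f = 2 * ∑ f ∈ pmEdges n, bCoe n A c f := by
    simp_rw [Finset.sum_filter]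
    rw [Finset.sum_comm, Finset.mul_sum]
    refine Finset.sum_congr rfl fun f hf => ?_
    have hends : ({w | w ∈ f} : Finset (Fin (2 * n))) = f.toFinset := by ext; simp
    rw [← Finset.sum_filter, Finset.sum_const, hends,
      Sym2.card_toFinset_of_not_isDiag f (mem_pmEdges.mp hf), nsmul_eq_mul, Nat.cast_ofNat]
  simpa [sum_bCoe_of_mem hA] using hdouble

theorem sum_bCoe_of_not_mem (hA : (A.ncard : ℝ) = c * (2 * n - 3)‼) {a b : Fin (2 * n)}
    (hab : a ≠ b) : ∑ f ∈ pmEdges n with a ∉ f ∧ b ∉ f, bCoe n A c f = bCoe n A c s(a, b) := by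
  have hsplit (f : Sym2 (Fin (2 * n))) : (if a ∉ f ∧ b ∉ f then bCoe n A c f else 0) =
      bCoe n A c f - (if a ∈ f then bCoe n A c f else 0) - (if b ∈ f then bCoe n A c f else 0)
        + (if f = s(a, b) then bCoe n A c f else 0) := by
    simp_rw [← Sym2.mem_and_mem_iff hab]
    by_cases haf : a ∈ f <;> by_cases hbf : b ∈ f <;> simp [haf, hbf]
  rw [Finset.sum_filter, Finset.sum_congr rfl fun f _ => hsplit f, Finset.sum_add_distrib,
    Finset.sum_sub_distrib, Finset.sum_sub_distrib, ← Finset.sum_filter, ← Finset.sum_filter,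
    sum_bCoe hA, sum_bCoe_of_mem hA, sum_bCoe_of_mem hA, Finset.sum_ite_eq',
    if_pos (mem_pmEdges.mpr fun h => hab (Sym2.mk_isDiag_iff.mp h))]
  ring

theorem ncard_pmStar_inter_pmStar_eq_ite {a b : Fin (2 * n)} (hab : a ≠ b)
    {f : Sym2 (Fin (2 * n))} (hf : f ∈ pmEdges n) :
    ((pmStar n s(a, b) ∩ pmStar n f).ncard : ℝ) =
      (if f = s(a, b) then ((2 * n - 3)‼ : ℝ) else 0) +
        (if a ∉ f ∧ b ∉ f then ((2 * n - 5)‼ : ℝ) else 0) := by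
  by_cases hfe : f = s(a, b)
  · subst hfe
    simp [ncard_pmStar (mem_pmEdges.mp hf)]
  by_cases haf : a ∈ f
  · simp [hfe, haf, pmStar_inter_pmStar_eq_empty (Ne.symm hfe) (Sym2.mem_mk_left a b) haf]
  by_cases hbf : b ∈ f
  · simp [hfe, hbf, pmStar_inter_pmStar_eq_empty (Ne.symm hfe) (Sym2.mem_mk_right a b) hbf]
  simp [hfe, haf, hbf, ncard_pmStar_inter_pmStar hab (mem_pmEdges.mp hf) haf hbf]

theorem sum_bCoe_mul_ncard_pmStar_inter (hA : (A.ncard : ℝ) = c * (2 * n - 3)‼) {e : Sym2 (Fin (2 * n))} (he : ¬e.IsDiag) :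
    ∑ f ∈ pmEdges n, bCoe n A c f * ((pmStar n e ∩ pmStar n f).ncard : ℝ) =
      bCoe n A c e * ((2 * n - 3)‼ + (2 * n - 5)‼) := by
  induction e using Sym2.ind with
  | _ a b =>
    have hab : a ≠ b := fun h => he (Sym2.mk_isDiag_iff.mpr h)
    rw [Finset.sum_congr rfl fun f hf => by rw [ncard_pmStar_inter_pmStar_eq_ite hab hf]]
    simp only [mul_add, mul_ite, mul_zero, Finset.sum_add_distrib, Finset.sum_ite_eq',
      mem_pmEdges.mpr he, if_true]
    rw [← Finset.sum_filter, ← Finset.sum_mul, sum_bCoe_of_not_mem hA hab]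

end Coefficients

theorem stmt14_general (n : ℕ) (hn : 3 ≤ n) (A : Set (PMatching n)) (c : ℝ)
    (hA : (A.ncard : ℝ) = c * (Nat.doubleFactorial (2 * n - 3) : ℝ)) :
    pmExp n (fun m => hFun n A c m ^ 2) =
      ((2 * (n : ℝ) - 2) / ((2 * (n : ℝ) - 1) * (2 * (n : ℝ) - 3))) *
        ∑ e ∈ pmEdges n, bCoe n A c e ^ 2 := by
  have hsum : ∑ m, hFun n A c m ^ 2 =
      (((2 * n - 3)‼ : ℝ) + (2 * n - 5)‼) * ∑ e ∈ pmEdges n, bCoe n A c e ^ 2 := by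
    unfold hFun
    rw [sum_sq_sum_mul_indicator, Finset.mul_sum]
    refine Finset.sum_congr rfl fun e he => ?_
    rw [← Finset.mul_sum, sum_bCoe_mul_ncard_pmStar_inter hA (mem_pmEdges.mp he)]
    ring
  rw [pmExp, hsum, ← mul_assoc, one_div_mul_eq_div,
    doubleFactorial_add_div_doubleFactorial (by omega)]

/-- Second moment of `h`: `E[h²] = ((2n-2)/((2n-1)(2n-3))) Σ_e b_e²`. -/
theorem stmt14 (n : ℕ) (hn : 3 ≤ n) (A : Set (PMatching n)) (c : ℝ) (hc : 0 ≤ c)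
    (hA : (A.ncard : ℝ) = c * (Nat.doubleFactorial (2 * n - 3) : ℝ)) :
    pmExp n (fun m => hFun n A c m ^ 2) =
      ((2 * (n : ℝ) - 2) / ((2 * (n : ℝ) - 1) * (2 * (n : ℝ) - 3))) *
        ∑ e ∈ pmEdges n, bCoe n A c e ^ 2 :=
  stmt14_general n hn A c hA

end
end
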